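/- With notation as above, define p^* : ℤ^{V(X)} → ℤ^{V(X̃)} by p^*(v) = c(v) · Σ_{ṽ ∈ p^{-1}(v)} ṽ. Then L_{X̃} ∘ p^* = p^* ∘ L_𝕏, so p^* descends to a homomorphism p^* : Jac(𝕏) → Jac(X̃), and the composition p_* ∘ p^* acts on Jac(𝕏) as multiplication by |G|. -/

import Mathlib

open Finset

/-- Connectivity of a graph presented by half-edges: root map `r` and involution `ι`. -/
def HalfConn {V H : Type*} (r : H → V) (ι : H → H) : Prop :=
  ∀ u v : V, Relation.ReflTransGen (fun a b => ∃ h, r h = a ∧ r (ι h) = b) u v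

/-- A graph (in terms of half-edges) together with an action of a group `G`. -/
structure GraphAct (G V H : Type*) [Group G] [MulAction G V] [MulAction G H] where
  r : H → V
  ι : H → H
  ι_invol : ∀ h, ι (ι h) = h
  smul_r : ∀ (g : G) (h : H), r (g • h) = g • r h
  smul_ι : ∀ (g : G) (h : H), ι (g • h) = g • ι h

variable {G V H : Type*} [Group G] [MulAction G V] [MulAction G H]

/-- Vertices of the quotient graph: orbits of vertices. -/
abbrev GraphAct.qVert (_ : GraphAct G V H) := Quotient (MulAction.orbitRel G V)

/-- Half-edges of the quotient graph: orbits of half-edges. -/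
abbrev GraphAct.qHalf (_ : GraphAct G V H) := Quotient (MulAction.orbitRel G H)

/-- The root map of the quotient graph. -/
def GraphAct.qr (X : GraphAct G V H) : X.qHalf → X.qVert :=
  Quotient.map X.r (by
    intro a b hab
    obtain ⟨g, rfl⟩ := hab
    exact ⟨g, (X.smul_r g b).symm⟩)

/-- The involution of the quotient graph. -/
def GraphAct.qι (X : GraphAct G V H) : X.qHalf → X.qHalf :=
  Quotient.map X.ι (by
    intro a b hab
    obtain ⟨g, rfl⟩ := hab
    exact ⟨g, (X.smul_ι g b).symm⟩)

/-- The vertex weight of the quotient graph of groups: the order of the stabilizer of a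
preimage vertex. -/
noncomputable def GraphAct.cVq (X : GraphAct G V H) (v : X.qVert) : ℕ :=
  Nat.card (MulAction.stabilizer G v.out)

/-- The half-edge weight of the quotient graph of groups: the order of the stabilizer of a
preimage half-edge. -/
noncomputable def GraphAct.cHq (X : GraphAct G V H) (h : X.qHalf) : ℕ :=
  Nat.card (MulAction.stabilizer G h.out)

/-- The (half-edge) Laplacian matrix of a graph. -/
def halfLapMat {V H : Type*} [Fintype H] [DecidableEq V]
    (r : H → V) (ι : H → H) : Matrix V V ℤ :=
  Matrix.of fun u v => ∑ h : H,
    if r h = v then (if r h = u then 1 else 0) - (if r (ι h) = u then 1 else 0) else 0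

/-- The weighted Laplacian matrix of a graph of groups with vertex weights `cV` and
half-edge weights `cH`: firing `v` moves `c(v)/c(h)` chips along each half-edge `h` at
`v` to `r(ι h)`. -/
def halfLapWMat {V H : Type*} [Fintype H] [DecidableEq V]
    (r : H → V) (ι : H → H) (cV : V → ℕ) (cH : H → ℕ) : Matrix V V ℤ :=
  Matrix.of fun u v => ∑ h : H,
    if r h = v then ((cV v / cH h : ℕ) : ℤ) *
      ((if r h = u then 1 else 0) - (if r (ι h) = u then 1 else 0)) else 0

/-- Degree (sum of coefficients) of a divisor, as a linear map. -/
def degHom (V : Type*) [Fintype V] : (V → ℤ) →ₗ[ℤ] ℤ where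
  toFun d := ∑ v, d v
  map_add' x y := Finset.sum_add_distrib
  map_smul' c x := by simp [Finset.mul_sum]

/-- Jacobian: degree-zero divisors modulo the image of (the linear map given by) `M`. -/
abbrev jacOfMat {V : Type*} [Fintype V] (M : Matrix V V ℤ) :=
  LinearMap.ker (degHom V) ⧸
    Submodule.comap (LinearMap.ker (degHom V)).subtype (LinearMap.range M.mulVecLin)

/-- Pushforward of divisors along a map of vertex sets: add up the chips in each fiber. -/
def pushV {V W : Type*} [Fintype V] [DecidableEq W] (p : V → W) (d : V → ℤ) : W → ℤ :=
  fun w => ∑ v ∈ Finset.univ.filter (fun v => p v = w), d v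

/-- Pullback of divisors to the cover: `p^*(D)(x) = c(p(x)) · D(p(x))`, i.e.
`p^*(v) = c(v) · Σ_{x ∈ p⁻¹(v)} x` on generators. -/
def pullV {V W : Type*} (p : V → W) (c : W → ℕ) (D : W → ℤ) : V → ℤ :=
  fun x => (c (p x) : ℤ) * D (p x)

/-! Since `p^* D` is constant on `G`-orbits, applying `L_{X̃}` to it at a vertex `u` counts each
half-edge orbit `k` at `p u` once for every half-edge of `k` rooted at `u`. These half-edges form
one orbit of the stabilizer of `u`, so by orbit–stabilizer there are `c(p u) / c(k)` of them, which
is the weight of `k` in `L_𝕏`. The same count for vertex orbits, `|G u| · c(p u) = |G|`, gives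
`p_* p^* = |G|`; hence `p^*` multiplies degrees by `|G|`, preserves degree-zero divisors and, by
the intertwining relation, descends to the Jacobians. -/

open MulAction

section Laplacian

variable {W E : Type*} [Fintype E] [DecidableEq W] {r : E → W} {ι : E → E}

lemma halfLapMat_eq_halfLapWMat : halfLapMat r ι = halfLapWMat r ι 1 1 := by
  ext u v
  simp [halfLapMat, halfLapWMat]

variable [Fintype W]

lemma halfLapWMat_mulVec (hι : Function.Involutive ι) (cV : W → ℕ) (cH : E → ℕ)
    (D : W → ℤ) (u : W) :
    (halfLapWMat r ι cV cH).mulVec D u =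
      ∑ h ∈ univ.filter (fun h => r h = u),
        (((cV u / cH h : ℕ) : ℤ) * D u - ((cV (r (ι h)) / cH (ι h) : ℕ) : ℤ) * D (r (ι h))) := by
  set a : E → ℤ := fun h => ((cV (r h) / cH h : ℕ) : ℤ) * D (r h)
  have hcollapse : (halfLapWMat r ι cV cH).mulVec D u =
      ∑ h, ((if r h = u then a h else 0) - if r (ι h) = u then a h else 0) := by
    simp only [Matrix.mulVec, dotProduct, halfLapWMat, Matrix.of_apply, sum_mul, ite_mul,
      zero_mul]
    rw [sum_comm]
    refine sum_congr rfl fun h _ => ?_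
    rw [sum_ite_eq]
    simp only [mem_univ, if_true, a]
    split_ifs <;> ring
  have hreindex : ∑ h, (if r (ι h) = u then a h else 0) = ∑ h, if r h = u then a (ι h) else 0 :=
    Fintype.sum_equiv (hι.toPerm ι) _ _ fun h => by simp [hι h]
  rw [hcollapse, sum_sub_distrib, hreindex, ← sum_sub_distrib, sum_filter]
  refine sum_congr rfl fun h _ => ?_
  split_ifs with hh
  · simp only [a, hh]
  · ring

lemma halfLapMat_mulVec (hι : Function.Involutive ι) (f : W → ℤ) (u : W) :
    (halfLapMat r ι).mulVec f u = ∑ h ∈ univ.filter (fun h => r h = u), (f u - f (r (ι h))) := by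
  simp [halfLapMat_eq_halfLapWMat, halfLapWMat_mulVec hι]

end Laplacian

section Orbits

variable {α β : Type*} [MulAction G α] [MulAction G β]

lemma card_stabilizer_eq_of_orbitRel {a b : α} (h : orbitRel G α a b) :
    Nat.card (stabilizer G a) = Nat.card (stabilizer G b) :=
  Nat.card_congr (stabilizerEquivStabilizerOfOrbitRel h).toEquiv

lemma stabilizer_le_stabilizer_of_map_smul {f : α → β} (hf : ∀ (g : G) x, f (g • x) = g • f x)
    (a : α) : stabilizer G a ≤ stabilizer G (f a) := fun g hg => by
  rw [mem_stabilizer_iff] at hg ⊢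
  rw [← hf, hg]

lemma ncard_orbit_mul_card_stabilizer (a : α) :
    (orbit G a).ncard * Nat.card (stabilizer G a) = Nat.card G := by
  rw [← index_stabilizer, Subgroup.index_mul_card]

lemma ncard_fiber_inter_orbit_mul_card_stabilizer {f : α → β}
    (hf : ∀ (g : G) x, f (g • x) = g • f x) (a : α) :
    {x | f x = f a ∧ x ∈ orbit G a}.ncard * Nat.card (stabilizer G a) =
      Nat.card (stabilizer G (f a)) := by
  set S := stabilizer G (f a)
  have hfiber : {x | f x = f a ∧ x ∈ orbit G a} = orbit S a := by
    ext x
    constructor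
    · rintro ⟨hx, g, rfl⟩
      refine ⟨⟨g, ?_⟩, rfl⟩
      rw [mem_stabilizer_iff, ← hf, hx]
    · rintro ⟨s, rfl⟩
      exact ⟨(hf s a).trans s.2, s, rfl⟩
  have hstab : stabilizer S a = (stabilizer G a).subgroupOf S := by
    ext; rfl
  rw [hfiber, ← index_stabilizer, ← Nat.card_congr
    (Subgroup.subgroupOfEquivOfLe (stabilizer_le_stabilizer_of_map_smul hf a)).toEquiv,
    ← hstab, Subgroup.index_mul_card]

end Orbits

namespace GraphAct

variable (X : GraphAct G V H)

lemma cVq_mk (u : V) : X.cVq (Quotient.mk _ u) = Nat.card (stabilizer G u) :=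
  card_stabilizer_eq_of_orbitRel (Quotient.exact (Quotient.out_eq _))

lemma cHq_mk (h : H) : X.cHq (Quotient.mk _ h) = Nat.card (stabilizer G h) :=
  card_stabilizer_eq_of_orbitRel (Quotient.exact (Quotient.out_eq _))

lemma qι_involutive : Function.Involutive X.qι := by
  rintro ⟨h⟩
  exact congrArg (Quotient.mk _) (X.ι_invol h)

lemma stabilizer_ι (h : H) : stabilizer G (X.ι h) = stabilizer G h := by
  refine le_antisymm ?_ (stabilizer_le_stabilizer_of_map_smul X.smul_ι h)
  simpa only [X.ι_invol] using stabilizer_le_stabilizer_of_map_smul X.smul_ι (X.ι h)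

lemma cHq_qι (k : X.qHalf) : X.cHq (X.qι k) = X.cHq k := by
  induction k using Quotient.inductionOn with
  | h h => exact (X.cHq_mk (X.ι h)).trans (by rw [X.stabilizer_ι, cHq_mk])

lemma cHq_dvd_cVq_qr (k : X.qHalf) : X.cHq k ∣ X.cVq (X.qr k) := by
  induction k using Quotient.inductionOn with
  | h h =>
    change _ ∣ X.cVq (Quotient.mk _ (X.r h))
    rw [cHq_mk, cVq_mk]
    exact Subgroup.card_dvd_of_le (stabilizer_le_stabilizer_of_map_smul X.smul_r h)

lemma card_filter_mk_eq_mul_cVq [Fintype V] [DecidableEq X.qVert] (w : X.qVert) :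
    (univ.filter fun v => Quotient.mk _ v = w).card * X.cVq w = Nat.card G := by
  induction w using Quotient.inductionOn with
  | h u =>
    refine Eq.trans ?_ (ncard_orbit_mul_card_stabilizer u)
    rw [cVq_mk, ← Set.ncard_coe_finset]
    congr 2
    ext v
    simp [Quotient.eq, orbitRel_apply]

lemma pushV_pullV [Fintype V] [DecidableEq X.qVert] (D : X.qVert → ℤ) :
    pushV (Quotient.mk _) (pullV (Quotient.mk _) X.cVq D) = (Nat.card G : ℤ) • D := by
  funext w
  rw [pushV, sum_congr rfl fun v hv => by rw [pullV, (mem_filter.1 hv).2], sum_const,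
    nsmul_eq_mul, Pi.smul_apply, smul_eq_mul, ← X.card_filter_mk_eq_mul_cVq w]
  push_cast
  ring

variable [Fintype H] [DecidableEq V]

lemma card_filter_r_eq_mk_eq_mul_cHq [DecidableEq X.qHalf] (u : V) {k : X.qHalf}
    (hk : X.qr k = Quotient.mk _ u) :
    (univ.filter fun h => X.r h = u ∧ Quotient.mk _ h = k).card * X.cHq k =
      X.cVq (Quotient.mk _ u) := by
  obtain ⟨h₀, hr, rfl⟩ : ∃ h₀, X.r h₀ = u ∧ Quotient.mk _ h₀ = k := by
    induction k using Quotient.inductionOn with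
    | h h =>
      obtain ⟨g, hg⟩ := Quotient.exact hk
      exact ⟨g⁻¹ • h, by rw [X.smul_r, ← hg, inv_smul_smul], Quotient.sound ⟨g⁻¹, rfl⟩⟩
  subst hr
  rw [cHq_mk, cVq_mk, ← ncard_fiber_inter_orbit_mul_card_stabilizer X.smul_r h₀,
    ← Set.ncard_coe_finset]
  congr 2
  ext h
  simp [Quotient.eq, orbitRel_apply]

variable [Finite G] [Fintype V] [Fintype X.qVert] [Fintype X.qHalf] [DecidableEq X.qVert]

lemma halfLapMat_mulVec_pullV (D : X.qVert → ℤ) :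
    (halfLapMat X.r X.ι).mulVec (pullV (Quotient.mk _) X.cVq D) =
      pullV (Quotient.mk _) X.cVq ((halfLapWMat X.qr X.qι X.cVq X.cHq).mulVec D) := by
  classical
  funext u
  set w : X.qVert := Quotient.mk _ u
  set F : X.qHalf → ℤ := fun k => X.cVq w * D w - X.cVq (X.qr (X.qι k)) * D (X.qr (X.qι k))
  set n : X.qHalf → ℕ := fun k => (univ.filter fun h => X.r h = u ∧ Quotient.mk _ h = k).card
  have hgroup :
      (halfLapMat X.r X.ι).mulVec (pullV (Quotient.mk _) X.cVq D) u = ∑ k, n k * F k := by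
    rw [halfLapMat_mulVec X.ι_invol]
    change ∑ h ∈ _, F (Quotient.mk _ h) = _
    rw [← sum_fiberwise _ (Quotient.mk (orbitRel G H))]
    refine sum_congr rfl fun k _ => ?_
    rw [sum_congr rfl fun h hh => congrArg F (mem_filter.1 hh).2, sum_const, filter_filter,
      nsmul_eq_mul]
  rw [hgroup, pullV, halfLapWMat_mulVec X.qι_involutive, mul_sum, sum_filter]
  refine sum_congr rfl fun k _ => ?_
  split_ifs with hk
  · have hn := X.card_filter_r_eq_mk_eq_mul_cHq u hk
    obtain ⟨m, hm⟩ := X.cHq_qι k ▸ X.cHq_dvd_cVq_qr (X.qι k)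
    have hpos : 0 < X.cHq k := Nat.card_pos
    simp only [F]
    rw [X.cHq_qι, hm, ← hn, Nat.mul_div_cancel _ hpos, Nat.mul_div_cancel_left _ hpos]
    push_cast
    ring
  · have hn : n k = 0 := card_eq_zero.2 <| filter_eq_empty_iff.2 fun h _ hh => hk (by
      rw [← hh.2, ← hh.1]
      rfl)
    rw [hn, Nat.cast_zero, zero_mul]

end GraphAct

section Jacobian

variable {U W : Type*} [Fintype U] [Fintype W]

def pullVLin (p : U → W) (c : W → ℕ) : (W → ℤ) →ₗ[ℤ] (U → ℤ) where
  toFun := pullV p c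
  map_add' D D' := funext fun x => mul_add _ (D (p x)) (D' (p x))
  map_smul' a D := funext fun x => mul_left_comm _ a (D (p x))

lemma degHom_pushV [DecidableEq W] (p : U → W) (d : U → ℤ) :
    degHom W (pushV p d) = degHom U d :=
  sum_fiberwise univ p d

def jacMap (M : Matrix U U ℤ) (N : Matrix W W ℤ) (P : (W → ℤ) →ₗ[ℤ] (U → ℤ))
    (hdeg : ∀ D, degHom W D = 0 → degHom U (P D) = 0)
    (hP : ∀ D, M.mulVec (P D) = P (N.mulVec D)) : jacOfMat N →ₗ[ℤ] jacOfMat M :=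
  Submodule.mapQ _ _ (P.restrict hdeg) <| by
    rintro x ⟨D, hD⟩
    exact ⟨P D, by rw [Matrix.mulVecLin_apply, hP, ← Matrix.mulVecLin_apply, hD]; rfl⟩

lemma jacMap_mk (M : Matrix U U ℤ) (N : Matrix W W ℤ) (P : (W → ℤ) →ₗ[ℤ] (U → ℤ))
    (hdeg : ∀ D, degHom W D = 0 → degHom U (P D) = 0)
    (hP : ∀ D, M.mulVec (P D) = P (N.mulVec D)) (x : LinearMap.ker (degHom W)) :
    jacMap M N P hdeg hP (Submodule.Quotient.mk x) = Submodule.Quotient.mk ⟨P x, hdeg x x.2⟩ :=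
  rfl

end Jacobian

theorem stmt7_general {G VV HH : Type*} [Group G] [Finite G] [MulAction G VV] [MulAction G HH]
    [Fintype VV] [Fintype HH] [DecidableEq VV]
    (X : GraphAct G VV HH)
    [Fintype X.qVert] [Fintype X.qHalf] [DecidableEq X.qVert] :
    (∀ D : X.qVert → ℤ,
        (halfLapMat X.r X.ι).mulVec (pullV (Quotient.mk (MulAction.orbitRel G VV)) X.cVq D) =
          pullV (Quotient.mk (MulAction.orbitRel G VV)) X.cVq
            ((halfLapWMat X.qr X.qι X.cVq X.cHq).mulVec D)) ∧
    (∃ ψ : jacOfMat (halfLapWMat X.qr X.qι X.cVq X.cHq) →+ jacOfMat (halfLapMat X.r X.ι),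
      ∀ (x : LinearMap.ker (degHom X.qVert)) (y : LinearMap.ker (degHom VV)),
        pullV (Quotient.mk (MulAction.orbitRel G VV)) X.cVq (x : X.qVert → ℤ) = (y : VV → ℤ) →
          ψ (Submodule.Quotient.mk x) = Submodule.Quotient.mk y) ∧
    (∀ D : X.qVert → ℤ,
        pushV (Quotient.mk (MulAction.orbitRel G VV))
            (pullV (Quotient.mk (MulAction.orbitRel G VV)) X.cVq D) =
          (Nat.card G : ℤ) • D) := by
  have hdeg (D : X.qVert → ℤ) (hD : degHom X.qVert D = 0) :
      degHom VV (pullVLin (Quotient.mk _) X.cVq D) = 0 := by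
    change degHom VV (pullV _ X.cVq D) = 0
    rw [← degHom_pushV (Quotient.mk (orbitRel G VV)), X.pushV_pullV, map_smul, hD, smul_zero]
  refine ⟨X.halfLapMat_mulVec_pullV,
    ⟨(jacMap _ _ _ hdeg X.halfLapMat_mulVec_pullV).toAddMonoidHom, fun x y hxy => ?_⟩,
    X.pushV_pullV⟩
  exact (jacMap_mk _ _ _ hdeg X.halfLapMat_mulVec_pullV x).trans (congrArg _ (Subtype.ext hxy))

/-- the pullback `p^*` along the quotient map `p : X̃ → X̃/G` satisfies
`L_{X̃} ∘ p^* = p^* ∘ L_𝕏`, descends to a homomorphism `Jac(𝕏) → Jac(X̃)`, and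
`p_* ∘ p^*` is multiplication by `|G|`. -/
theorem stmt7 {G VV HH : Type*} [Group G] [Finite G] [MulAction G VV] [MulAction G HH]
    [Fintype VV] [Fintype HH] [DecidableEq VV]
    (X : GraphAct G VV HH)
    [Fintype X.qVert] [Fintype X.qHalf] [DecidableEq X.qVert]
    (hconn : HalfConn X.r X.ι) :
    (∀ D : X.qVert → ℤ,
        (halfLapMat X.r X.ι).mulVec (pullV (Quotient.mk (MulAction.orbitRel G VV)) X.cVq D) =
          pullV (Quotient.mk (MulAction.orbitRel G VV)) X.cVq
            ((halfLapWMat X.qr X.qι X.cVq X.cHq).mulVec D)) ∧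
    (∃ ψ : jacOfMat (halfLapWMat X.qr X.qι X.cVq X.cHq) →+ jacOfMat (halfLapMat X.r X.ι),
      ∀ (x : LinearMap.ker (degHom X.qVert)) (y : LinearMap.ker (degHom VV)),
        pullV (Quotient.mk (MulAction.orbitRel G VV)) X.cVq (x : X.qVert → ℤ) = (y : VV → ℤ) →
          ψ (Submodule.Quotient.mk x) = Submodule.Quotient.mk y) ∧
    (∀ D : X.qVert → ℤ,
        pushV (Quotient.mk (MulAction.orbitRel G VV))
            (pullV (Quotient.mk (MulAction.orbitRel G VV)) X.cVq D) =
          (Nat.card G : ℤ) • D) :=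
  stmt7_general X
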